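/- Exactness at the middle term: the image of the map A : C⁺(G₊₁(v)) → C⁺(G) equals the kernel of the map B : C⁺(G) → C⁺(G−v). -/

import Mathlib

/-!
Common setup: the lattice cohomology complex of a weighted graph
(Némethi; J. Greene, "A surgery triangle for lattice cohomology").

A finite graph `G` with integer weights on vertices and signs on (multi-)edges is
encoded by its symmetric incidence data `M : V → V → ℤ`: for `u ≠ w` the entry
`M u w` is the signed number of edges joining `u` and `w`, and `M u u = m(u)` is
the weight of `u`.  This is exactly the data of the intersection pairing `(·,·)`
on `L(G) = ℤ⟨E_u : u ∈ V⟩`, via `M u w = (E_u, E_w)`.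
-/

noncomputable section

open Function

/-- A graph with integer vertex weights and signed multi-edges, encoded by the
symmetric pairing data `M u w = (E_u, E_w)` on `L(G)`. -/
structure WGraph (V : Type*) where
  M : V → V → ℤ
  symm : ∀ u w, M u w = M w u

variable {V : Type*} [Fintype V] [DecidableEq V]

/-- Evaluation of `K ∈ Hom(L(G), ℤ)` (recorded by its components `K u = K(E_u)`)
on a lattice vector `x = ∑ x_u E_u ∈ L(G)`. -/
def evalK (K x : V → ℤ) : ℤ := ∑ u, K u * x u

/-- `E_T = ∑_{j ∈ T} E_j ∈ L(G)`. -/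
def eVec (T : Finset V) : V → ℤ := fun u => if u ∈ T then 1 else 0

/-- Splitting a sum over `V` at a vertex `v`. -/
theorem sum_split (v : V) (f : V → ℤ) :
    ∑ u, f u = f v + ∑ u : {u : V // u ≠ v}, f u.1 := by
  rw [Fintype.sum_eq_add_sum_compl v f]
  congr 1
  exact Finset.sum_subtype _ (fun x => by simp) f

namespace WGraph

/-- The symmetric bilinear pairing `(x, y)` on `L(G)`. -/
def pair (G : WGraph V) (x y : V → ℤ) : ℤ := ∑ u, ∑ w, G.M u w * x u * y w

/-- `K ∈ Hom(L(G),ℤ)` is characteristic: `(K,x) ≡ (x,x) (mod 2)` for all `x ∈ L(G)`. -/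
def IsChar (G : WGraph V) (K : V → ℤ) : Prop :=
  ∀ x : V → ℤ, evalK K x ≡ G.pair x x [ZMOD 2]

/-- The set `Char(G)` of characteristic vectors, as a type. -/
def Ch (G : WGraph V) : Type _ := {K : V → ℤ // G.IsChar K}

/-- `K + 2x ∈ Hom(L(G),ℤ)`, for `K ∈ Hom(L(G),ℤ)` and `x ∈ L(G)` (a lattice vector
is viewed in `Hom(L(G),ℤ)` via the pairing). -/
def chAdd (G : WGraph V) (K x : V → ℤ) : V → ℤ := fun u => K u + 2 * G.pair x (eVec {u})

/-- The difference `q(K + 2x) − q(K) = −((K,x) + (x,x))/2`, where `q(y) = −(y,y)/8`;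
it is an integer whenever `K` is characteristic. -/
def qdiff (G : WGraph V) (K x : V → ℤ) : ℤ := (-(evalK K x + G.pair x x)) / 2

/-- The difference `q(K,S) − q(K) = max { q(K + 2E_T) − q(K) : T ⊆ S }`, where
`q(K,S) = max { q(K + 2 ∑_{j∈T} E_j) : T ⊆ S }`. -/
def qrel (G : WGraph V) (K : V → ℤ) (S : Finset V) : ℤ :=
  S.powerset.sup' (Finset.powerset_nonempty S) fun T => G.qdiff K (eVec T)

/-- `G₊₁(v)`: increase the weight `m(v)` of the vertex `v` by one. -/
def bump (G : WGraph V) (v : V) : WGraph V where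
  M u w := if u = v ∧ w = v then G.M u w + 1 else G.M u w
  symm u w := by
    have h := G.symm u w
    by_cases hu : u = v <;> by_cases hw : w = v <;> simp [hu, hw, h] <;>
      exact G.symm _ _

/-- `G − v`: delete the vertex `v` and all incident edges. -/
def delete (G : WGraph V) (v : V) : WGraph {u : V // u ≠ v} where
  M u w := G.M u.1 w.1
  symm u w := G.symm u.1 w.1

theorem evalK_update (L y : V → ℤ) (v : V) (c : ℤ) :
    evalK (Function.update L v (L v + c)) y = evalK L y + c * y v := by
  unfold evalK
  have h : ∀ u, Function.update L v (L v + c) u * y u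
      = L u * y u + (if u = v then c * y u else 0) := by
    intro u
    rcases eq_or_ne u v with hu | hu <;> simp [hu, Function.update] <;> ring
  simp only [h]
  rw [Finset.sum_add_distrib, Finset.sum_ite_eq' Finset.univ v (fun u => c * y u)]
  simp

theorem IsChar.chAdd {G : WGraph V} {K : V → ℤ} (h : G.IsChar K) (x : V → ℤ) :
    G.IsChar (G.chAdd K x) := by
  intro y
  have key : evalK (G.chAdd K x) y
      = evalK K y + 2 * ∑ u, G.pair x (eVec {u}) * y u := by
    simp only [evalK, WGraph.chAdd, add_mul, mul_assoc]
    rw [Finset.sum_add_distrib, ← Finset.mul_sum]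
  have hy := h y
  simp only [Int.ModEq] at hy ⊢
  rw [key]
  omega

theorem pair_bump (G : WGraph V) (v : V) (y : V → ℤ) :
    (G.bump v).pair y y = G.pair y y + y v * y v := by
  unfold pair bump
  have hu : ∀ u w : V, ((if u = v ∧ w = v then G.M u w + 1 else G.M u w) * y u * y w)
      = G.M u w * y u * y w + (if u = v ∧ w = v then y u * y w else 0) := by
    intro u w
    rcases eq_or_ne u v with h | h <;> rcases eq_or_ne w v with h' | h' <;>
      simp [h, h'] <;> ring
  simp only [hu, Finset.sum_add_distrib]
  congr 1
  have hin : ∀ u : V, (∑ w, if u = v ∧ w = v then y u * y w else 0)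
      = if u = v then y u * y v else 0 := by
    intro u
    rcases eq_or_ne u v with h | h
    · simp [h, Finset.sum_ite_eq' Finset.univ v (fun w => y v * y w)]
    · simp [h]
  rw [Finset.sum_congr rfl (fun u _ => hin u),
    Finset.sum_ite_eq' Finset.univ v (fun u => y u * y v)]
  simp

theorem IsChar.bumpUpdate {G : WGraph V} {L : V → ℤ} (h : G.IsChar L) (v : V) (i : ℤ) :
    (G.bump v).IsChar (Function.update L v (L v + (2 * i + 1))) := by
  intro y
  have h1 := evalK_update L y v (2 * i + 1)
  have h2 := pair_bump G v y
  have hy := h y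
  obtain ⟨k, hk⟩ := Int.even_mul_succ_self (y v - 1)
  have hk' : y v * y v - y v = 2 * k := by
    have h5 : (y v - 1) * (y v - 1 + 1) = y v * y v - y v := by ring
    omega
  have h3 : (2 * i + 1) * y v = 2 * (i * y v) + y v := by ring
  simp only [Int.ModEq] at hy ⊢
  rw [h1, h2, h3]
  omega

theorem IsChar.evenUpdate {G : WGraph V} {L : V → ℤ} (h : G.IsChar L) (v : V) (k : ℤ) :
    G.IsChar (Function.update L v (L v + 2 * k)) := by
  intro y
  have h1 := evalK_update L y v (2 * k)
  have hy := h y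
  have h3 : 2 * k * y v = 2 * (k * y v) := by ring
  simp only [Int.ModEq] at hy ⊢
  rw [h1, h3]
  omega

end WGraph

/-- Extension of `K ∈ Hom(L(G−v),ℤ)` to `Hom(L(G),ℤ)` by the value `t` at `v`:
the vector denoted `(K, t)`. -/
def extV (v : V) (K : {u : V // u ≠ v} → ℤ) (t : ℤ) : V → ℤ :=
  fun u => if h : u = v then t else K ⟨u, h⟩

namespace WGraph

theorem IsChar.extChar {G : WGraph V} {v : V} {K : {u : V // u ≠ v} → ℤ}
    (h : (G.delete v).IsChar K) {t : ℤ} (ht : t ≡ G.M v v [ZMOD 2]) :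
    G.IsChar (extV v K t) := by
  intro y
  have h1 : evalK (extV v K t) y = t * y v + evalK K (fun u => y u.1) := by
    unfold evalK
    rw [sum_split v (fun u => extV v K t u * y u)]
    congr 1
    · simp [extV]
    · exact Finset.sum_congr rfl fun u _ => by simp [extV, u.2]
  have h2 : G.pair y y = (G.delete v).pair (fun u => y u.1) (fun u => y u.1)
      + G.M v v * (y v * y v)
      + 2 * ∑ u : {u : V // u ≠ v}, G.M v u.1 * y v * y u.1 := by
    have step1 : G.pair y y = (∑ w, G.M v w * y v * y w)
        + ∑ u : {u : V // u ≠ v}, ∑ w, G.M u.1 w * y u.1 * y w :=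
      sum_split v (fun u => ∑ w, G.M u w * y u * y w)
    have step2 : (∑ w, G.M v w * y v * y w)
        = G.M v v * y v * y v + ∑ w : {w : V // w ≠ v}, G.M v w.1 * y v * y w.1 :=
      sum_split v _
    have step3 : ∀ u : {u : V // u ≠ v}, (∑ w, G.M u.1 w * y u.1 * y w)
        = G.M u.1 v * y u.1 * y v + ∑ w : {w : V // w ≠ v}, G.M u.1 w.1 * y u.1 * y w.1 :=
      fun u => sum_split v _
    have step4 : (G.delete v).pair (fun u => y u.1) (fun u => y u.1)
        = ∑ u : {u : V // u ≠ v}, ∑ w : {w : V // w ≠ v}, G.M u.1 w.1 * y u.1 * y w.1 := rfl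
    have hc : (∑ u : {u : V // u ≠ v}, G.M u.1 v * y u.1 * y v)
        = ∑ u : {u : V // u ≠ v}, G.M v u.1 * y v * y u.1 := by
      refine Finset.sum_congr rfl fun u _ => ?_
      rw [G.symm u.1 v]; ring
    rw [step1, step2, Finset.sum_congr rfl (fun u _ => step3 u),
      Finset.sum_add_distrib, hc, step4]
    ring
  have hy := h (fun u => y u.1)
  obtain ⟨k, hk⟩ := Int.even_mul_succ_self (y v - 1)
  have hk' : y v * y v - y v = 2 * k := by
    have h5 : (y v - 1) * (y v - 1 + 1) = y v * y v - y v := by ring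
    omega
  obtain ⟨a, ha⟩ : (2:ℤ) ∣ t - G.M v v := Int.ModEq.dvd ht.symm
  have e1 : t * y v = G.M v v * y v + 2 * (a * y v) := by
    have h6 : t = G.M v v + 2 * a := by omega
    rw [h6]; ring
  have e2 : G.M v v * (y v * y v) = G.M v v * y v + 2 * (G.M v v * k) := by
    have h7 : y v * y v = y v + 2 * k := by omega
    rw [h7]; ring
  simp only [Int.ModEq] at hy ⊢
  rw [h1, h2, e1, e2]
  omega

variable {G : WGraph V}

/-- `K + 2x` as a characteristic vector. -/
def Ch.add (K : G.Ch) (x : V → ℤ) : G.Ch := ⟨G.chAdd K.1 x, K.2.chAdd x⟩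

/-- For `K = (K', t) ∈ Char(G)`, the characteristic vector
`(K', t + 2i + 1) ∈ Char(G₊₁(v))`. -/
def Ch.bumpSh (K : G.Ch) (v : V) (i : ℤ) : (G.bump v).Ch :=
  ⟨Function.update K.1 v (K.1 v + (2 * i + 1)), K.2.bumpUpdate v i⟩

/-- For `K = (K', t) ∈ Char(G)`, the characteristic vector `(K', t + 2k) ∈ Char(G)`. -/
def Ch.evenSh (K : G.Ch) (v : V) (k : ℤ) : G.Ch :=
  ⟨Function.update K.1 v (K.1 v + 2 * k), K.2.evenUpdate v k⟩

/-- For `K ∈ Char(G−v)`, the characteristic vector `(K, m(v) + 2i) ∈ Char(G)`. -/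
def Ch.extend {v : V} (K : (G.delete v).Ch) (i : ℤ) : G.Ch :=
  ⟨extV v K.1 (G.M v v + 2 * i),
    K.2.extChar (by show (G.M v v + 2 * i) % 2 = G.M v v % 2; omega)⟩

end WGraph

/-- `𝒯⁺₀ = 𝔽[U,U⁻¹]/(U·𝔽[U])` over `𝔽 = ℤ/2ℤ`: the coefficient at `d ∈ ℕ` records
the coefficient of `U^{−d}`. -/
def Tplus : Type := ℕ →₀ ZMod 2

instance : AddCommGroup Tplus := inferInstanceAs (AddCommGroup (ℕ →₀ ZMod 2))
instance : Module (ZMod 2) Tplus := inferInstanceAs (Module (ZMod 2) (ℕ →₀ ZMod 2))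

/-- The element `U^{-m}` of `𝒯⁺₀`. -/
def Um (m : ℕ) : Tplus := (Finsupp.single m 1 : ℕ →₀ ZMod 2)

/-- Multiplication by `U^e` on `𝒯⁺₀`: `U^e · U^{−d} = U^{−(d−e)}` (which is `0` if `d < e`). -/
def Upow (e : ℤ) (f : Tplus) : Tplus :=
  (Finsupp.comapDomain (fun d : ℕ => (d : ℤ) + e)
    (Finsupp.embDomain ⟨(Nat.cast : ℕ → ℤ), Nat.cast_injective⟩ (f : ℕ →₀ ZMod 2))
    (fun a _ b _ hab => Nat.cast_injective (add_right_cancel hab)) : ℕ →₀ ZMod 2)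

theorem Upow_zero (e : ℤ) : Upow e 0 = 0 := by
  show (Finsupp.comapDomain _ (Finsupp.embDomain _ (0 : ℕ →₀ ZMod 2)) _ : ℕ →₀ ZMod 2)
    = (0 : ℕ →₀ ZMod 2)
  ext d
  simp

/-- `C⁺(G)`: the `𝔽[U]`-module of finitely supported maps `Char(G) × 𝒫(V) → 𝒯⁺₀`. -/
abbrev Cplus (G : WGraph V) : Type _ := (G.Ch × Finset V) →₀ Tplus

/-- The action of (multiplication by) `U` on `C⁺(G)`. -/
def UC (G : WGraph V) (φ : Cplus G) : Cplus G := Finsupp.mapRange (Upow 1) (Upow_zero 1) φ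

/-- `U^{−m} · (K,S)^∨`: the element of `C⁺(G)` supported at the single pair `(K,S)`
with value `U^{−m}`. -/
def dual {G : WGraph V} (p : G.Ch × Finset V) (m : ℕ) : Cplus G :=
  Finsupp.single p (Um m)

/-- The exponent `q(K,S) − q(K, S−w)`. -/
def dExp₁ (G : WGraph V) (K : V → ℤ) (S : Finset V) (w : V) : ℤ :=
  G.qrel K S - G.qrel K (S.erase w)

/-- The exponent `q(K,S) − q(K + 2E_w, S−w)`. -/
def dExp₂ (G : WGraph V) (K : V → ℤ) (S : Finset V) (w : V) : ℤ :=
  G.qrel K S - (G.qdiff K (eVec {w}) + G.qrel (G.chAdd K (eVec {w})) (S.erase w))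

/-- `δ` is the operator on `C⁺(G)` given by
`δ(φ)(K,S) = ∑_{w∈S} [U^{q(K,S)−q(K,S−w)}·φ(K,S−w) + U^{q(K,S)−q(K+2E_w,S−w)}·φ(K+2E_w,S−w)]`. -/
def IsDelta (G : WGraph V) (δ : Cplus G → Cplus G) : Prop :=
  ∀ (φ : Cplus G) (K : G.Ch) (S : Finset V),
    δ φ (K, S) = ∑ w ∈ S,
      (Upow (dExp₁ G K.1 S w) (φ (K, S.erase w))
        + Upow (dExp₂ G K.1 S w) (φ (K.add (eVec {w}), S.erase w)))

/-- The exponent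
`c(i,(K,t),S) = [q((K,t),S) − q(K,t)] − [q'((K,t+2i+1),S) − q'(K,t+2i+1)] + i(i+1)/2`. -/
def cExp (G : WGraph V) (v : V) (i : ℤ) (K : G.Ch) (S : Finset V) : ℤ :=
  G.qrel K.1 S - (G.bump v).qrel (K.bumpSh v i).1 S + i * (i + 1) / 2

/-- `A` is the map `C⁺(G₊₁(v)) → C⁺(G)` given by
`A(φ)((K,t),S) = ∑_{i∈ℤ} U^{c(i,(K,t),S)} · φ((K,t+2i+1),S)`. -/
def IsA (G : WGraph V) (v : V) (A : Cplus (G.bump v) → Cplus G) : Prop :=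
  ∀ (φ : Cplus (G.bump v)) (K : G.Ch) (S : Finset V),
    A φ (K, S) = ∑ᶠ i : ℤ, Upow (cExp G v i K S) (φ (K.bumpSh v i, S))

/-- A subset `S ⊆ V − v` viewed as a subset of `V`. -/
def liftS (v : V) (S : Finset {u : V // u ≠ v}) : Finset V :=
  S.map ⟨Subtype.val, Subtype.val_injective⟩

/-- `B` is the map `C⁺(G) → C⁺(G−v)` given by
`B(φ)(K,S) = ∑_{i∈ℤ} φ((K, m(v)+2i), S)`. -/
def IsB (G : WGraph V) (v : V) (B : Cplus G → Cplus (G.delete v)) : Prop :=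
  ∀ (φ : Cplus G) (K : (G.delete v).Ch) (S : Finset {u : V // u ≠ v}),
    B φ (K, S) = ∑ᶠ i : ℤ, φ (K.extend i, liftS v S)

/-- `r((K,t),S) = q((K,t),S−v) − q((K,t)+2E_v,S−v)` (for `v ∈ S`). -/
def rVal (G : WGraph V) (v : V) (K : G.Ch) (S : Finset V) : ℤ :=
  G.qrel K.1 (S.erase v)
    - (G.qdiff K.1 (eVec {v}) + G.qrel (G.chAdd K.1 (eVec {v})) (S.erase v))

/-- The lattice cohomology `ℍ⁺`: the homology of the complex `(C⁺, δ)`. -/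
abbrev Hlat {G : WGraph V} (δ : Cplus G →ₗ[ZMod 2] Cplus G) : Type _ :=
  LinearMap.ker δ ⧸ (LinearMap.range δ).comap (LinearMap.ker δ).subtype

/-- `𝒟₁ ⊆ C⁺(G)`: the `𝔽`-submodule generated by the `U^{−m}·((K,t),S)^∨` with `v ∈ S`. -/
def D1 (G : WGraph V) (v : V) : Submodule (ZMod 2) (Cplus G) :=
  Submodule.span (ZMod 2)
    {χ | ∃ (K : G.Ch) (S : Finset V) (m : ℕ), v ∈ S ∧ χ = dual (K, S) m}

/-- `𝒟₂ ⊆ C⁺(G)`: the `𝔽`-submodule generated by the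
`U^{−m}·[((K,t),S)^∨ + ((K,t+2),S)^∨]` with `v ∉ S`. -/
def D2 (G : WGraph V) (v : V) : Submodule (ZMod 2) (Cplus G) :=
  Submodule.span (ZMod 2)
    {χ | ∃ (K : G.Ch) (S : Finset V) (m : ℕ), v ∉ S ∧
      χ = dual (K, S) m + dual (K.evenSh v 1, S) m}

/-!
`B ∘ A = 0` because along a row `((K, t + 2j), S)` with `v ∉ S` the exponents of `A` are the
triangular numbers `(n - j)(n - j + 1)/2`, which the involution `j ↦ 2n + 1 - j` pairs off in
characteristic two.

Conversely, a cycle of `B` is reduced to `0` modulo the range of `A` by induction on its degree and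
on the number of its terms of top degree: terms over `S ∋ v` lie in the range of `A` themselves,
and terms over `S ∌ v` come in pairs within each row (the row sums vanish), which `A` of a
telescoping sum removes up to terms of lower degree.
-/

theorem ZMod.eq_one_of_ne_zero {c : ZMod 2} (h : c ≠ 0) : c = 1 := by
  revert c
  decide

namespace Tplus

/-- The coefficient of `U^{-n}`. -/
def coeff (n : ℕ) : Tplus →+ ZMod 2 where
  toFun x := (show ℕ →₀ ZMod 2 from x) n
  map_zero' := rfl
  map_add' _ _ := rfl

theorem coeff_apply (n : ℕ) (x : Tplus) : coeff n x = (show ℕ →₀ ZMod 2 from x) n := rfl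

theorem ext {x y : Tplus} (h : ∀ n, coeff n x = coeff n y) : x = y := Finsupp.ext h

theorem add_self (x : Tplus) : x + x = 0 :=
  ext fun n => by rw [map_add, CharTwo.add_self_eq_zero, map_zero]

theorem coeff_Um (m n : ℕ) : coeff n (Um m) = if m = n then 1 else 0 :=
  Finsupp.single_apply

theorem coeff_Upow (e : ℤ) (x : Tplus) (n : ℕ) :
    coeff n (Upow e x) = if 0 ≤ (n : ℤ) + e then coeff ((n : ℤ) + e).toNat x else 0 := by
  rw [coeff_apply, coeff_apply, Upow]
  refine (Finsupp.comapDomain_apply _ _ _ _).trans ?_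
  split_ifs with h
  · conv_lhs => rw [← Int.toNat_of_nonneg h]
    exact Finsupp.embDomain_apply_self _ _ _
  · refine Finsupp.embDomain_of_notMem_range _ _ _ ?_
    rintro ⟨m, hm⟩
    simp only [Function.Embedding.coeFn_mk] at hm
    omega

theorem coeff_Upow_of_nonneg {e : ℤ} (he : 0 ≤ e) (x : Tplus) (n : ℕ) :
    coeff n (Upow e x) = coeff (n + e.toNat) x := by
  rw [coeff_Upow, if_pos (by omega), show ((n : ℤ) + e).toNat = n + e.toNat by omega]

theorem coeff_Upow_Um (e : ℤ) (d n : ℕ) :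
    coeff n (Upow e (Um d)) = if (n : ℤ) + e = d then 1 else 0 := by
  rw [coeff_Upow]
  simp only [coeff_Um]
  split_ifs <;> first | rfl | omega

def support (x : Tplus) : Finset ℕ := (show ℕ →₀ ZMod 2 from x).support

theorem mem_support {x : Tplus} {n : ℕ} : n ∈ x.support ↔ coeff n x ≠ 0 := Finsupp.mem_support_iff

theorem sum_Um_support (x : Tplus) : ∑ n ∈ x.support, Um n = x :=
  ext fun n => by
    rw [map_sum]
    simp only [coeff_Um, Finset.sum_ite_eq', mem_support]
    split_ifs with h
    · exact (ZMod.eq_one_of_ne_zero h).symm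
    · exact (not_not.mp h).symm

theorem eventually_coeff_eq_zero (x : Tplus) : ∀ᶠ n in Filter.atTop, coeff n x = 0 := by
  rw [← Nat.cofinite_eq_atTop, Filter.eventually_cofinite]
  simp only [← mem_support]
  exact x.support.finite_toSet

def DegreeLT (D : ℕ) (x : Tplus) : Prop := ∀ n, D ≤ n → coeff n x = 0

theorem exists_degreeLT (x : Tplus) : ∃ D, x.DegreeLT D :=
  Filter.eventually_atTop.mp x.eventually_coeff_eq_zero

theorem DegreeLT.add {D : ℕ} {x y : Tplus} (hx : x.DegreeLT D) (hy : y.DegreeLT D) :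
    (x + y).DegreeLT D := fun n hn => by rw [map_add, hx n hn, hy n hn, add_zero]

theorem DegreeLT.Upow {D : ℕ} {x : Tplus} (h : x.DegreeLT D) {e : ℤ} (he : 0 ≤ e) :
    (Upow e x).DegreeLT D := fun n hn => by
  rw [coeff_Upow_of_nonneg he]
  exact h _ (by omega)

theorem DegreeLT.of_coeff_eq_zero {D : ℕ} {x : Tplus} (h : x.DegreeLT (D + 1))
    (hD : coeff D x = 0) : x.DegreeLT D := fun n hn => by
  rcases hn.eq_or_lt with rfl | hlt
  exacts [hD, h n hlt]

theorem eq_zero_of_degreeLT_zero {x : Tplus} (h : x.DegreeLT 0) : x = 0 :=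
  ext fun n => h n n.zero_le

end Tplus

open Tplus

theorem Upow_add (e : ℤ) (x y : Tplus) : Upow e (x + y) = Upow e x + Upow e y :=
  ext fun n => by simp only [coeff_Upow, map_add]; split_ifs <;> simp

theorem Upow_eq_zero_of_degreeLT {D : ℕ} {x : Tplus} (h : x.DegreeLT D) {e : ℤ}
    (he : D ≤ e) : Upow e x = 0 :=
  ext fun n => by
    rw [coeff_Upow_of_nonneg (by omega), map_zero]
    exact h _ (by omega)

def triangle (i : ℤ) : ℤ := i * (i + 1) / 2

theorem two_mul_triangle (i : ℤ) : 2 * triangle i = i * (i + 1) := by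
  obtain ⟨k, hk⟩ := Int.even_mul_succ_self i
  unfold triangle
  omega

theorem triangle_neg_sub_one (i : ℤ) : triangle (-1 - i) = triangle i := by
  unfold triangle
  ring_nf

theorem le_triangle (i : ℤ) : i ≤ triangle i := by
  nlinarith [two_mul_triangle i, mul_self_nonneg (2 * i - 1)]

theorem neg_sub_one_le_triangle (i : ℤ) : -1 - i ≤ triangle i :=
  triangle_neg_sub_one i ▸ le_triangle (-1 - i)

theorem triangle_nonneg (i : ℤ) : 0 ≤ triangle i := by
  have := le_triangle i
  have := neg_sub_one_le_triangle i
  omega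

theorem lt_triangle {i : ℤ} (h : 2 ≤ i) : i < triangle i := by
  nlinarith [two_mul_triangle i]

theorem triangle_eq_zero_iff {i : ℤ} : triangle i = 0 ↔ i = 0 ∨ i = -1 := by
  constructor
  · intro h
    have h₁ := two_mul_triangle i
    rw [h, mul_zero, eq_comm, mul_eq_zero] at h₁
    omega
  · rintro (rfl | rfl) <;> rfl

omit [Fintype V] in
theorem eVec_of_mem {T : Finset V} {u : V} (h : u ∈ T) : eVec T u = 1 := if_pos h

omit [Fintype V] in
theorem eVec_of_notMem {T : Finset V} {u : V} (h : u ∉ T) : eVec T u = 0 := if_neg h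

omit [Fintype V] in
theorem eVec_insert {v : V} {T : Finset V} (hT : v ∉ T) :
    eVec (insert v T) = eVec {v} + eVec T := by
  funext u
  by_cases h : u = v
  · subst h
    simp [eVec, hT]
  · simp [eVec, h]

omit [DecidableEq V] in
theorem evalK_add_right (K x y : V → ℤ) : evalK K (x + y) = evalK K x + evalK K y := by
  simp only [evalK, Pi.add_apply, mul_add, Finset.sum_add_distrib]

theorem evalK_eVec_singleton (K : V → ℤ) (u : V) : evalK K (eVec {u}) = K u := by
  simp [evalK, eVec]

namespace WGraph

omit [DecidableEq V] in
theorem pair_comm (G : WGraph V) (x y : V → ℤ) : G.pair x y = G.pair y x := by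
  unfold pair
  rw [Finset.sum_comm]
  refine Finset.sum_congr rfl fun u _ => Finset.sum_congr rfl fun w _ => ?_
  rw [G.symm w u]
  ring

omit [DecidableEq V] in
theorem pair_add_right (G : WGraph V) (x y z : V → ℤ) :
    G.pair x (y + z) = G.pair x y + G.pair x z := by
  simp only [pair, Pi.add_apply, mul_add, Finset.sum_add_distrib]

omit [DecidableEq V] in
theorem pair_add_left (G : WGraph V) (x y z : V → ℤ) :
    G.pair (x + y) z = G.pair x z + G.pair y z := by
  rw [pair_comm, pair_add_right, pair_comm G z, pair_comm G z]

theorem pair_eVec_singleton_right (G : WGraph V) (x : V → ℤ) (u : V) :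
    G.pair x (eVec {u}) = ∑ a, G.M a u * x a := by
  simp [pair, eVec]

theorem pair_eVec_singleton_self (G : WGraph V) (v : V) :
    G.pair (eVec {v}) (eVec {v}) = G.M v v := by
  rw [pair_eVec_singleton_right, ← evalK, evalK_eVec_singleton]

theorem evalK_chAdd (G : WGraph V) (K x y : V → ℤ) :
    evalK (G.chAdd K x) y = evalK K y + 2 * G.pair x y := by
  have h : G.pair x y = ∑ u, G.pair x (eVec {u}) * y u := by
    simp only [pair_eVec_singleton_right, Finset.sum_mul]
    rw [Finset.sum_comm]
    exact Finset.sum_congr rfl fun u _ => Finset.sum_congr rfl fun w _ => by ring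
  simp only [evalK, chAdd, add_mul, Finset.sum_add_distrib, h, Finset.mul_sum, mul_assoc]

theorem pair_bump_eVec_singleton_of_ne (G : WGraph V) {u v : V} (h : u ≠ v) (x : V → ℤ) :
    (G.bump v).pair x (eVec {u}) = G.pair x (eVec {u}) := by
  simp [pair_eVec_singleton_right, bump, h]

variable {G : WGraph V} {v : V}

omit [DecidableEq V] in
theorem two_mul_qdiff {K : V → ℤ} (hK : G.IsChar K) (x : V → ℤ) :
    2 * G.qdiff K x = -(evalK K x + G.pair x x) := by
  obtain ⟨a, ha⟩ := (hK x).dvd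
  unfold qdiff
  omega

theorem qdiff_congr_of_notMem {L L' : V → ℤ} (hL : ∀ u, u ≠ v → L u = L' u) {T : Finset V}
    (hT : v ∉ T) : G.qdiff L (eVec T) = G.qdiff L' (eVec T) := by
  have h : evalK L (eVec T) = evalK L' (eVec T) :=
    Finset.sum_congr rfl fun u _ => by
      rcases eq_or_ne u v with rfl | hu
      · rw [eVec_of_notMem hT, mul_zero, mul_zero]
      · rw [hL u hu]
  rw [qdiff, qdiff, h]

theorem qdiff_bump_of_notMem (L : V → ℤ) {T : Finset V} (hT : v ∉ T) :
    (G.bump v).qdiff L (eVec T) = G.qdiff L (eVec T) := by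
  rw [qdiff, qdiff, pair_bump, eVec_of_notMem hT, mul_zero, add_zero]

theorem qdiff_insert {K : V → ℤ} (hK : G.IsChar K) {T : Finset V} (hT : v ∉ T) :
    G.qdiff K (eVec (insert v T))
      = G.qdiff K (eVec {v}) + G.qdiff (G.chAdd K (eVec {v})) (eVec T) := by
  have h₁ := two_mul_qdiff hK (eVec (insert v T))
  have h₂ := two_mul_qdiff hK (eVec {v})
  have h₃ := two_mul_qdiff (hK.chAdd (eVec {v})) (eVec T)
  rw [eVec_insert hT] at h₁ ⊢
  rw [evalK_add_right, pair_add_right, pair_add_left, pair_add_left,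
    pair_comm G (eVec T)] at h₁
  rw [evalK_chAdd] at h₃
  omega

theorem qrel_congr {G' : WGraph V} {K K' : V → ℤ} {S : Finset V}
    (h : ∀ T ⊆ S, G'.qdiff K' (eVec T) = G.qdiff K (eVec T)) : G'.qrel K' S = G.qrel K S :=
  Finset.sup'_congr _ rfl fun T hT => h T (Finset.mem_powerset.mp hT)

theorem qrel_eq_max {K : V → ℤ} (hK : G.IsChar K) {S : Finset V} (hv : v ∈ S) :
    G.qrel K S = max (G.qrel K (S.erase v))
      (G.qdiff K (eVec {v}) + G.qrel (G.chAdd K (eVec {v})) (S.erase v)) := by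
  conv_lhs => rw [← Finset.insert_erase hv]
  unfold qrel
  rw [Finset.sup'_congr _ (Finset.powerset_insert _ v) fun _ _ => rfl,
    Finset.sup'_union (Finset.powerset_nonempty _) ((Finset.powerset_nonempty _).image _),
    Finset.sup'_image, Finset.apply_sup'_eq_sup'_comp (Finset.powerset_nonempty _)
      (G.qdiff K (eVec {v}) + ·) fun x y => (max_add_add_left _ x y).symm]
  congr 1
  refine Finset.sup'_congr _ rfl fun T hT => qdiff_insert hK fun hvT => ?_
  exact Finset.notMem_erase v S (Finset.mem_powerset.mp hT hvT)

end WGraph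

namespace WGraph.Ch

variable {G : WGraph V} {v : V}

theorem evenSh_val (K : G.Ch) (v : V) (j : ℤ) (u : V) :
    (K.evenSh v j).1 u = if u = v then K.1 v + 2 * j else K.1 u :=
  Function.update_apply _ _ _ _

theorem bumpSh_val (K : G.Ch) (v : V) (i : ℤ) (u : V) :
    (K.bumpSh v i).1 u = if u = v then K.1 v + (2 * i + 1) else K.1 u :=
  Function.update_apply _ _ _ _

theorem evenSh_zero (K : G.Ch) : K.evenSh v 0 = K :=
  Subtype.ext <| funext fun u => by rw [evenSh_val]; split_ifs with h <;> simp [h]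

theorem evenSh_evenSh (K : G.Ch) (j j' : ℤ) :
    (K.evenSh v j).evenSh v j' = K.evenSh v (j + j') :=
  Subtype.ext <| funext fun u => by
    rcases eq_or_ne u v with rfl | h <;> simp [evenSh_val, *, mul_add, add_assoc]

theorem evenSh_bumpSh (K : G.Ch) (j i : ℤ) :
    (K.evenSh v j).bumpSh v i = K.bumpSh v (i + j) :=
  Subtype.ext <| funext fun u => by
    rcases eq_or_ne u v with rfl | h <;> simp [bumpSh_val, evenSh_val, *]
    ring

theorem evenSh_injective (K : G.Ch) : Function.Injective (K.evenSh v) := fun j j' h => by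
  have h' : (K.evenSh v j).1 v = (K.evenSh v j').1 v := by rw [h]
  rw [evenSh_val, evenSh_val, if_pos rfl, if_pos rfl] at h'
  omega

theorem bumpSh_injective (K : G.Ch) : Function.Injective (K.bumpSh v) := fun i i' h => by
  have h' : (K.bumpSh v i).1 v = (K.bumpSh v i').1 v := by rw [h]
  rw [bumpSh_val, bumpSh_val, if_pos rfl, if_pos rfl] at h'
  omega

theorem eq_evenSh_of_bumpSh_eq {K K' : G.Ch} {i i' : ℤ} (h : K'.bumpSh v i' = K.bumpSh v i) :
    K' = K.evenSh v (i - i') :=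
  Subtype.ext <| funext fun u => by
    have h' : (K'.bumpSh v i').1 u = (K.bumpSh v i).1 u := by rw [h]
    simp only [bumpSh_val, evenSh_val] at h' ⊢
    split_ifs at h' ⊢ with hu
    · subst hu; omega
    · exact h'

theorem exists_bumpSh_eq (L : (G.bump v).Ch) : ∃ K : G.Ch, K.bumpSh v 0 = L := by
  have hchar : G.IsChar (Function.update L.1 v (L.1 v - 1)) := by
    intro y
    have h₁ := WGraph.evalK_update L.1 y v (-1)
    have h₂ := pair_bump G v y
    obtain ⟨k, hk⟩ := Int.even_mul_succ_self (y v - 1)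
    obtain ⟨a, ha⟩ := (L.2 y).dvd
    rw [← sub_eq_add_neg] at h₁
    rw [Int.ModEq, h₁]
    have : (y v - 1) * (y v - 1 + 1) = y v * y v - y v := by ring
    omega
  let K : G.Ch := ⟨_, hchar⟩
  refine ⟨K, Subtype.ext <| funext fun u => ?_⟩
  rw [bumpSh_val]
  rcases eq_or_ne u v with rfl | h
  · simp [K]
  · simp [K, h]

theorem isChar_restrict (K : G.Ch) :
    (G.delete v).IsChar (fun u : {u : V // u ≠ v} => K.1 u.1) := by
  intro x
  set x' : V → ℤ := fun u => if h : u = v then 0 else x ⟨u, h⟩ with hx'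
  have hx'v : x' v = 0 := by simp [hx']
  have hsub : ∀ u : {u : V // u ≠ v}, x' u.1 = x u := fun u => by simp [hx', u.2]
  have h₁ : evalK (fun u : {u : V // u ≠ v} => K.1 u.1) x = evalK K.1 x' := by
    rw [evalK, evalK, sum_split v, hx'v, mul_zero, zero_add]
    simp only [hsub]
  have h₂ : (G.delete v).pair x x = G.pair x' x' := by
    rw [pair, pair, sum_split v]
    simp only [hx'v, mul_zero, zero_mul, Finset.sum_const_zero, zero_add]
    refine Finset.sum_congr rfl fun u _ => ?_
    rw [sum_split v (fun w => G.M u.1 w * x' u.1 * x' w), hx'v, mul_zero, zero_add]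
    simp only [hsub]
    rfl
  rw [h₁, h₂]
  exact K.2 x'

def restrict (K : G.Ch) (v : V) : (G.delete v).Ch := ⟨fun u => K.1 u.1, isChar_restrict K⟩

theorem extend_val (K : (G.delete v).Ch) (i : ℤ) (u : V) :
    (K.extend i).1 u = if h : u = v then G.M v v + 2 * i else K.1 ⟨u, h⟩ := rfl

theorem exists_extend_restrict_eq (K : G.Ch) : ∃ i : ℤ, (K.restrict v).extend i = K := by
  obtain ⟨a, ha⟩ := (K.2 (eVec {v})).dvd
  rw [evalK_eVec_singleton, pair_eVec_singleton_self] at ha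
  refine ⟨-a, Subtype.ext <| funext fun u => ?_⟩
  rw [extend_val]
  split_ifs with h
  · subst h; omega
  · rfl

theorem extend_eq_evenSh (K : (G.delete v).Ch) (i i₀ : ℤ) :
    K.extend i = (K.extend i₀).evenSh v (i - i₀) :=
  Subtype.ext <| funext fun u => by
    rw [evenSh_val]
    rcases eq_or_ne u v with rfl | h
    · rw [if_pos rfl, extend_val, extend_val, dif_pos rfl, dif_pos rfl]
      ring
    · rw [if_neg h, extend_val, extend_val, dif_neg h, dif_neg h]

theorem extend_injective (K : (G.delete v).Ch) : Function.Injective K.extend := fun i i' h => by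
  have h' : (K.extend i).1 v = (K.extend i').1 v := by rw [h]
  simp only [extend_val, dif_pos] at h'
  omega

end WGraph.Ch

section Exponents

open WGraph

variable {G : WGraph V} {v : V}

theorem qdiff_bumpSh (K : G.Ch) (i : ℤ) (T : Finset V) :
    (G.bump v).qdiff (K.bumpSh v i).1 (eVec T) = G.qdiff K.1 (eVec T) - (i + 1) * eVec T v := by
  have h₁ := two_mul_qdiff (K.bumpSh v i).2 (eVec T)
  have h₂ := two_mul_qdiff K.2 (eVec T)
  have h₃ : evalK (K.bumpSh v i).1 (eVec T) = evalK K.1 (eVec T) + (2 * i + 1) * eVec T v :=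
    evalK_update K.1 (eVec T) v (2 * i + 1)
  have h₄ := pair_bump G v (eVec T)
  by_cases hv : v ∈ T
  · rw [eVec_of_mem hv] at h₃ h₄ ⊢
    omega
  · rw [eVec_of_notMem hv] at h₃ h₄ ⊢
    omega

theorem qdiff_evenSh (K : G.Ch) (j : ℤ) (T : Finset V) :
    G.qdiff (K.evenSh v j).1 (eVec T) = G.qdiff K.1 (eVec T) - j * eVec T v := by
  have h₁ := two_mul_qdiff (K.evenSh v j).2 (eVec T)
  have h₂ := two_mul_qdiff K.2 (eVec T)
  have h₃ : evalK (K.evenSh v j).1 (eVec T) = evalK K.1 (eVec T) + 2 * j * eVec T v :=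
    evalK_update K.1 (eVec T) v (2 * j)
  by_cases hv : v ∈ T
  · rw [eVec_of_mem hv] at h₃ ⊢
    omega
  · rw [eVec_of_notMem hv] at h₃ ⊢
    omega

theorem qrel_bumpSh_of_notMem (K : G.Ch) (i : ℤ) {S : Finset V} (hv : v ∉ S) :
    (G.bump v).qrel (K.bumpSh v i).1 S = G.qrel K.1 S :=
  qrel_congr fun T hT => by
    rw [qdiff_bumpSh, eVec_of_notMem fun h => hv (hT h), mul_zero, sub_zero]

theorem cExp_of_notMem (i : ℤ) (K : G.Ch) {S : Finset V} (hv : v ∉ S) :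
    cExp G v i K S = triangle i := by
  rw [cExp, qrel_bumpSh_of_notMem K i hv, sub_self, zero_add, triangle]

theorem cExp_neg_one (K : G.Ch) (S : Finset V) : cExp G v (-1) K S = 0 := by
  have h : (G.bump v).qrel (K.bumpSh v (-1)).1 S = G.qrel K.1 S :=
    qrel_congr fun T _ => by rw [qdiff_bumpSh]; ring
  rw [cExp, h]
  norm_num

/-- `q(K, S − v) − q(K)`. -/
def qErase (G : WGraph V) (v : V) (K : G.Ch) (S : Finset V) : ℤ := G.qrel K.1 (S.erase v)

/-- `q(K + 2E_v, S − v) − q(K)`. -/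
def qEraseAdd (G : WGraph V) (v : V) (K : G.Ch) (S : Finset V) : ℤ :=
  G.qdiff K.1 (eVec {v}) + G.qrel (G.chAdd K.1 (eVec {v})) (S.erase v)

theorem qrel_bumpSh_of_mem (K : G.Ch) (i : ℤ) {S : Finset V} (hv : v ∈ S) :
    (G.bump v).qrel (K.bumpSh v i).1 S = max (qErase G v K S) (qEraseAdd G v K S - (i + 1)) := by
  have hvS : v ∉ S.erase v := Finset.notMem_erase v S
  have hchAdd : ∀ u, u ≠ v →
      (G.bump v).chAdd (K.bumpSh v i).1 (eVec {v}) u = G.chAdd K.1 (eVec {v}) u := fun u hu => by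
    rw [chAdd, chAdd, pair_bump_eVec_singleton_of_ne G hu, Ch.bumpSh_val, if_neg hu]
  rw [qrel_eq_max (K.bumpSh v i).2 hv, qrel_bumpSh_of_notMem K i hvS, qdiff_bumpSh,
    eVec_of_mem (Finset.mem_singleton_self v),
    qrel_congr (G := G) (K := G.chAdd K.1 (eVec {v})) fun T hT =>
      (qdiff_bump_of_notMem _ fun h => hvS (hT h)).trans
        (qdiff_congr_of_notMem hchAdd fun h => hvS (hT h))]
  rw [qErase, qEraseAdd]
  congr 1
  ring

theorem cExp_of_mem (i : ℤ) (K : G.Ch) {S : Finset V} (hv : v ∈ S) :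
    cExp G v i K S = max (qErase G v K S) (qEraseAdd G v K S)
      - max (qErase G v K S) (qEraseAdd G v K S - (i + 1)) + triangle i := by
  rw [cExp, qrel_bumpSh_of_mem K i hv, qrel_eq_max K.2 hv]
  rfl

theorem rVal_evenSh (K : G.Ch) (j : ℤ) (S : Finset V) :
    rVal G v (K.evenSh v j) S = rVal G v K S + j := by
  have hvS : v ∉ S.erase v := Finset.notMem_erase v S
  have hoff : ∀ u, u ≠ v → (K.evenSh v j).1 u = K.1 u := fun u hu => by
    rw [Ch.evenSh_val, if_neg hu]
  have h₁ : G.qrel (K.evenSh v j).1 (S.erase v) = G.qrel K.1 (S.erase v) :=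
    qrel_congr fun T hT => qdiff_congr_of_notMem hoff fun h => hvS (hT h)
  have h₂ : G.qrel (G.chAdd (K.evenSh v j).1 (eVec {v})) (S.erase v)
      = G.qrel (G.chAdd K.1 (eVec {v})) (S.erase v) :=
    qrel_congr fun T hT => qdiff_congr_of_notMem (fun u hu => by rw [chAdd, chAdd, hoff u hu])
      fun h => hvS (hT h)
  rw [rVal, rVal, h₁, h₂, qdiff_evenSh, eVec_of_mem (Finset.mem_singleton_self v)]
  ring

theorem cExp_nonneg (i : ℤ) (K : G.Ch) (S : Finset V) : 0 ≤ cExp G v i K S := by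
  have := triangle_nonneg i
  have := neg_sub_one_le_triangle i
  by_cases hv : v ∈ S
  · rw [cExp_of_mem i K hv]
    omega
  · rw [cExp_of_notMem i K hv]
    omega

theorem cExp_eq_zero {i : ℤ} {K : G.Ch} {S : Finset V} (hv : v ∈ S) (h : cExp G v i K S = 0) :
    i = -1 ∨ (i = 0 ∧ 0 ≤ rVal G v K S) ∨ (i = -2 ∧ rVal G v K S ≤ 0) := by
  rw [cExp_of_mem i K hv] at h
  have hr : rVal G v K S = qErase G v K S - qEraseAdd G v K S := by
    rw [rVal, qErase, qEraseAdd]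
  have := le_triangle i
  have := neg_sub_one_le_triangle i
  rcases (by omega : i = -1 ∨ i = 0 ∨ i = -2 ∨ 1 ≤ i ∨ i ≤ -3) with h₁ | rfl | rfl | h₁ | h₁
  · exact Or.inl h₁
  · rw [show triangle 0 = 0 from rfl] at h
    omega
  · rw [show triangle (-2) = 1 from rfl] at h
    omega
  · omega
  · have := triangle_neg_sub_one i ▸ lt_triangle (i := -1 - i) (by omega)
    omega

end Exponents

section Maps

open WGraph

variable {G : WGraph V} {v : V}

omit [Fintype V] [DecidableEq V] in
theorem notMem_liftS (S : Finset {u : V // u ≠ v}) : v ∉ liftS v S := by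
  simp [liftS]

omit [Fintype V] in
theorem liftS_subtype {S : Finset V} (hv : v ∉ S) : liftS v (S.subtype (· ≠ v)) = S := by
  ext u
  simp only [liftS, Finset.mem_map, Finset.mem_subtype, Function.Embedding.coeFn_mk]
  exact ⟨fun ⟨a, ha, hau⟩ => hau ▸ ha, fun hu => ⟨⟨u, fun h => hv (h ▸ hu)⟩, hu, rfl⟩⟩

theorem hasFiniteSupport_Upow_bumpSh (ψ : Cplus (G.bump v)) (K : G.Ch) (S : Finset V) :
    Function.HasFiniteSupport fun i => Upow (cExp G v i K S) (ψ (K.bumpSh v i, S)) := by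
  refine Set.Finite.subset (ψ.hasFiniteSupport.fun_comp_of_injective
    (g := fun i => (K.bumpSh v i, S)) fun i i' h => K.bumpSh_injective (congrArg Prod.fst h)) ?_
  intro i hi h
  exact hi (by simp only [h, Upow_zero])

theorem hasFiniteSupport_extend (φ : Cplus G) (K : (G.delete v).Ch) (S : Finset V) :
    Function.HasFiniteSupport fun i => φ (K.extend i, S) :=
  φ.hasFiniteSupport.fun_comp_of_injective fun _ _ h => K.extend_injective (congrArg Prod.fst h)

variable {A : Cplus (G.bump v) → Cplus G} {B : Cplus G → Cplus (G.delete v)}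

def IsA.toAddMonoidHom (hA : IsA G v A) : Cplus (G.bump v) →+ Cplus G where
  toFun := A
  map_zero' := Finsupp.ext fun ⟨K, S⟩ => by simp [hA 0 K S, Upow_zero]
  map_add' ψ ψ' := Finsupp.ext fun ⟨K, S⟩ => by
    rw [Finsupp.add_apply, hA, hA, hA, ← finsum_add_distrib (hasFiniteSupport_Upow_bumpSh ψ K S)
      (hasFiniteSupport_Upow_bumpSh ψ' K S)]
    simp only [Finsupp.add_apply, Upow_add]

theorem IsA.coe_toAddMonoidHom (hA : IsA G v A) : ⇑hA.toAddMonoidHom = A := rfl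

def IsB.toAddMonoidHom (hB : IsB G v B) : Cplus G →+ Cplus (G.delete v) where
  toFun := B
  map_zero' := Finsupp.ext fun ⟨K, S⟩ => by simp [hB _ K S]
  map_add' φ φ' := Finsupp.ext fun ⟨K, S⟩ => by
    rw [Finsupp.add_apply, hB, hB, hB, ← finsum_add_distrib (hasFiniteSupport_extend φ K _)
      (hasFiniteSupport_extend φ' K _)]
    simp only [Finsupp.add_apply]

theorem IsB.coe_toAddMonoidHom (hB : IsB G v B) : ⇑hB.toAddMonoidHom = B := rfl

theorem IsA.single_apply_evenSh (hA : IsA G v A) (K : G.Ch) (n j : ℤ) (S : Finset V)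
    (x : Tplus) :
    A (Finsupp.single (K.bumpSh v n, S) x) (K.evenSh v j, S)
      = Upow (cExp G v (n - j) (K.evenSh v j) S) x := by
  rw [hA, finsum_eq_single _ (n - j)]
  · rw [Ch.evenSh_bumpSh, sub_add_cancel, Finsupp.single_eq_same]
  · intro i hi
    rw [Ch.evenSh_bumpSh, Finsupp.single_eq_of_ne, Upow_zero]
    intro h
    have := K.bumpSh_injective (congrArg Prod.fst h)
    omega

theorem IsA.single_apply_eq_zero (hA : IsA G v A) (K : G.Ch) (n : ℤ) (S : Finset V)
    (x : Tplus) {p : G.Ch × Finset V} (hp : ∀ j, p ≠ (K.evenSh v j, S)) :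
    A (Finsupp.single (K.bumpSh v n, S) x) p = 0 := by
  obtain ⟨K', S'⟩ := p
  rw [hA]
  refine finsum_eq_zero_of_forall_eq_zero fun i => ?_
  rw [Finsupp.single_eq_of_ne, Upow_zero]
  intro h
  obtain ⟨hK, hS⟩ := Prod.mk.inj h
  exact hp (n - i) (Prod.ext (Ch.eq_evenSh_of_bumpSh_eq hK) hS)

/-- The terms pair off under `i ↦ 2c + 1 - i`, since `triangle (-1 - m) = triangle m`. -/
theorem finsum_Upow_triangle (x : Tplus) (c : ℤ) : ∑ᶠ i : ℤ, Upow (triangle (c - i)) x = 0 := by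
  obtain ⟨D, hD⟩ := x.exists_degreeLT
  have hsupp : (Function.support fun i => Upow (triangle (c - i)) x)
      ⊆ Finset.Icc (c - D) (c + D + 1) := by
    intro i hi
    have := le_triangle (c - i)
    have := neg_sub_one_le_triangle (c - i)
    simp only [Finset.coe_Icc, Set.mem_Icc]
    by_contra h
    exact hi (Upow_eq_zero_of_degreeLT hD (by omega))
  rw [finsum_eq_finsetSum_of_support_subset _ hsupp]
  refine Finset.sum_involution (fun i _ => 2 * c + 1 - i) (fun i _ => ?_) (fun i _ _ => by omega)
    (fun i hi => by simp only [Finset.mem_Icc] at hi ⊢; omega) (fun i _ => by omega)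
  rw [show c - (2 * c + 1 - i) = -1 - (c - i) by ring, triangle_neg_sub_one]
  exact Tplus.add_self _

theorem B_A_single_eq_zero (hA : IsA G v A) (hB : IsB G v B) (K : G.Ch) (S : Finset V)
    (x : Tplus) :
    B (A (Finsupp.single (K.bumpSh v 0, S) x)) = 0 := by
  refine Finsupp.ext fun ⟨K'', S''⟩ => ?_
  rw [hB, Finsupp.zero_apply]
  by_cases hrow : liftS v S'' = S ∧ ∃ i₀ j₀, K''.extend i₀ = K.evenSh v j₀
  · obtain ⟨rfl, i₀, j₀, hij⟩ := hrow
    have hterm : ∀ i, A (Finsupp.single (K.bumpSh v 0, liftS v S'') x) (K''.extend i, liftS v S'')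
        = Upow (triangle ((i₀ - j₀) - i)) x := fun i => by
      rw [K''.extend_eq_evenSh i i₀, hij, Ch.evenSh_evenSh, hA.single_apply_evenSh,
        cExp_of_notMem _ _ (notMem_liftS S'')]
      ring_nf
    rw [finsum_congr hterm, finsum_Upow_triangle]
  · refine finsum_eq_zero_of_forall_eq_zero fun i => hA.single_apply_eq_zero _ _ _ _ fun j h => ?_
    obtain ⟨hK, hS⟩ := Prod.ext_iff.mp h
    exact hrow ⟨hS, i, j, hK⟩

theorem B_A_eq_zero (hA : IsA G v A) (hB : IsB G v B) (ψ : Cplus (G.bump v)) : B (A ψ) = 0 := by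
  suffices hB.toAddMonoidHom.comp hA.toAddMonoidHom = 0 from DFunLike.congr_fun this ψ
  refine Finsupp.addHom_ext fun ⟨L, S⟩ x => ?_
  obtain ⟨K, rfl⟩ := Ch.exists_bumpSh_eq L
  exact B_A_single_eq_zero hA hB K S x

theorem IsB.finsum_evenSh (hB : IsB G v B) (φ : Cplus G) (K : G.Ch) {S : Finset V} (hv : v ∉ S) :
    ∑ᶠ j, φ (K.evenSh v j, S) = B φ (K.restrict v, S.subtype (· ≠ v)) := by
  obtain ⟨i₀, hi₀⟩ := K.exists_extend_restrict_eq (v := v)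
  rw [hB, liftS_subtype hv, ← finsum_comp_equiv (Equiv.subRight i₀)]
  refine finsum_congr fun i => ?_
  rw [Equiv.subRight_apply, (K.restrict v).extend_eq_evenSh i i₀, hi₀]

end Maps

section Layers

variable {P : Type*}

def layer (n : ℕ) : (P →₀ Tplus) →+ (P →₀ ZMod 2) := Finsupp.mapRange.addMonoidHom (coeff n)

theorem layer_apply (n : ℕ) (φ : P →₀ Tplus) (p : P) : layer n φ p = coeff n (φ p) :=
  Finsupp.mapRange_apply (hf := map_zero _) ..

theorem layer_single_Um [DecidableEq P] (n : ℕ) (p : P) :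
    layer n (Finsupp.single p (Um n)) = Finsupp.single p 1 := by
  ext q
  rw [layer_apply, Finsupp.single_apply, Finsupp.single_apply]
  split_ifs <;> simp [coeff_Um]

variable (P) in
def degreeLT (D : ℕ) : AddSubgroup (P →₀ Tplus) where
  carrier := {φ | ∀ p, (φ p).DegreeLT D}
  add_mem' ha hb p := (ha p).add (hb p)
  zero_mem' _ _ _ := map_zero _
  neg_mem' ha p n hn := by rw [Finsupp.neg_apply, map_neg, ha p n hn, neg_zero]

theorem exists_mem_degreeLT (φ : P →₀ Tplus) : ∃ D, φ ∈ degreeLT P D := by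
  have h : ∀ᶠ n in Filter.atTop, ∀ p ∈ φ.support, coeff n (φ p) = 0 :=
    (Filter.eventually_all_finset _).mpr fun p _ => (φ p).eventually_coeff_eq_zero
  obtain ⟨D, hD⟩ := Filter.eventually_atTop.mp h
  refine ⟨D, fun p n hn => ?_⟩
  by_cases hp : p ∈ φ.support
  · exact hD n hn p hp
  · rw [Finsupp.notMem_support_iff.mp hp, map_zero]

theorem eq_zero_of_mem_degreeLT_zero {φ : P →₀ Tplus} (h : φ ∈ degreeLT P 0) : φ = 0 :=
  Finsupp.ext fun p => eq_zero_of_degreeLT_zero (h p)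

theorem mem_degreeLT_of_layer_eq_zero {φ : P →₀ Tplus} {D : ℕ} (h : φ ∈ degreeLT P (D + 1))
    (hD : layer D φ = 0) : φ ∈ degreeLT P D := fun p =>
  (h p).of_coeff_eq_zero (by rw [← layer_apply, hD, Finsupp.zero_apply])

theorem single_Um_mem_degreeLT (p : P) (D : ℕ) : Finsupp.single p (Um D) ∈ degreeLT P (D + 1) := by
  classical
  intro q n hn
  rw [Finsupp.single_apply]
  split_ifs
  · rw [coeff_Um, if_neg (by omega)]
  · exact map_zero _

theorem mem_of_forall_layer_ne_zero {H : AddSubgroup (P →₀ Tplus)} (φ : P →₀ Tplus)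
    (h : ∀ p n, layer n φ p ≠ 0 → Finsupp.single p (Um n) ∈ H) : φ ∈ H := by
  rw [← φ.sum_single]
  refine H.sum_mem fun p _ => ?_
  rw [← (φ p).sum_Um_support, Finsupp.single_finsetSum]
  exact H.sum_mem fun n hn => h p n (by rwa [layer_apply, ← mem_support])

theorem card_support_add_lt [DecidableEq P] {f g : P →₀ ZMod 2} (hgf : g.support ⊆ f.support)
    (hg : g ≠ 0) : (f + g).support.card < f.support.card := by
  obtain ⟨a, ha⟩ := Finsupp.support_nonempty_iff.mpr hg
  refine Finset.card_lt_card ⟨fun x hx => ?_, fun hsub => ?_⟩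
  · rw [Finsupp.mem_support_iff, Finsupp.add_apply] at hx
    by_contra hxf
    rw [Finsupp.notMem_support_iff.mp hxf, zero_add] at hx
    exact hxf (hgf (Finsupp.mem_support_iff.mpr hx))
  · have := hsub (hgf ha)
    rw [Finsupp.mem_support_iff, Finsupp.add_apply,
      ZMod.eq_one_of_ne_zero (Finsupp.mem_support_iff.mp (hgf ha)),
      ZMod.eq_one_of_ne_zero (Finsupp.mem_support_iff.mp ha)] at this
    exact this rfl

end Layers

section Exactness

open WGraph

variable {G : WGraph V} {v : V} {A : Cplus (G.bump v) → Cplus G} {B : Cplus G → Cplus (G.delete v)}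

/-- Induction on `d`, then on `|r(K, S)|`: apart from `U^{-d} · (K, S)^∨`, the image of
`U^{-d} · (K.bumpSh v (-1), S)^∨` has terms of lower degree and at most one term of degree `d`,
at a neighbour of `K` with smaller `|r|`. -/
theorem dual_mem_range_of_mem (hA : IsA G v A) (d : ℕ) (K : G.Ch) {S : Finset V} (hv : v ∈ S) :
    dual (K, S) d ∈ hA.toAddMonoidHom.range := by
  classical
  induction d using Nat.strong_induction_on generalizing K with
  | _ d ihd =>
  induction hr : (rVal G v K S).natAbs using Nat.strong_induction_on generalizing K with
  | _ r ihr =>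
  have hξ : A (dual (K.bumpSh v (-1), S) d) ∈ hA.toAddMonoidHom.range := ⟨_, rfl⟩
  suffices A (dual (K.bumpSh v (-1), S) d) + dual (K, S) d ∈ hA.toAddMonoidHom.range by
    simpa using AddSubgroup.sub_mem _ this hξ
  refine mem_of_forall_layer_ne_zero _ fun p m hm => ?_
  rw [layer_apply, Finsupp.add_apply, map_add, dual, dual, Finsupp.single_apply] at hm
  by_cases hrow : ∃ j, p = (K.evenSh v j, S)
  swap
  · simp only [not_exists] at hrow
    rw [hA.single_apply_eq_zero _ _ _ _ hrow, if_neg fun h => hrow 0 (by rw [← h, K.evenSh_zero]),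
      map_zero, add_zero] at hm
    exact absurd rfl hm
  obtain ⟨j, rfl⟩ := hrow
  rw [hA.single_apply_evenSh, coeff_Upow_Um] at hm
  obtain rfl | hj := eq_or_ne j 0
  · rw [K.evenSh_zero, if_pos rfl, coeff_Um, sub_zero, cExp_neg_one, add_zero] at hm
    split_ifs at hm <;> first | omega | exact absurd (by decide) hm
  have hne : (K, S) ≠ (K.evenSh v j, S) := fun h =>
    hj (K.evenSh_injective ((K.evenSh_zero (v := v)).trans (Prod.mk.inj h).1)).symm
  rw [if_neg hne, map_zero, add_zero] at hm
  have hmd : (m : ℤ) + cExp G v (-1 - j) (K.evenSh v j) S = d := by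
    by_contra h
    exact hm (if_neg h)
  rcases (cExp_nonneg (v := v) (-1 - j) (K.evenSh v j) S).lt_or_eq with hc | hc
  · exact ihd m (by omega) _
  · obtain rfl : m = d := by omega
    have hrj := rVal_evenSh (v := v) K j S
    rcases cExp_eq_zero hv hc.symm with h | ⟨h, hr'⟩ | ⟨h, hr'⟩
    · omega
    all_goals exact ihr _ (by omega) _ rfl

theorem IsA.mem_degreeLT (hA : IsA G v A) {ψ : Cplus (G.bump v)} {D : ℕ}
    (hψ : ψ ∈ degreeLT _ D) : A ψ ∈ degreeLT _ D := fun ⟨K, S⟩ n hn => by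
  rw [hA, map_finsum (coeff n) (hasFiniteSupport_Upow_bumpSh ψ K S)]
  exact finsum_eq_zero_of_forall_eq_zero fun i => (hψ _).Upow (cExp_nonneg i K S) n hn

theorem layer_A_dual_bumpSh (hA : IsA G v A) (K : G.Ch) (n : ℤ) {S : Finset V} (hv : v ∉ S)
    (D : ℕ) : layer D (A (dual (K.bumpSh v n, S) D))
      = Finsupp.single (K.evenSh v n, S) 1 + Finsupp.single (K.evenSh v (n + 1), S) 1 := by
  classical
  ext p
  rw [layer_apply, Finsupp.add_apply, Finsupp.single_apply, Finsupp.single_apply]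
  by_cases hrow : ∃ k, p = (K.evenSh v k, S)
  · obtain ⟨k, rfl⟩ := hrow
    rw [dual, hA.single_apply_evenSh, cExp_of_notMem _ _ hv, coeff_Upow_Um]
    simp only [Prod.mk.injEq, and_true, K.evenSh_injective.eq_iff, add_eq_left,
      triangle_eq_zero_iff]
    split_ifs <;> first | rfl | omega
  · simp only [not_exists] at hrow
    rw [dual, hA.single_apply_eq_zero _ _ _ _ hrow, map_zero, if_neg (Ne.symm (hrow n)),
      if_neg (Ne.symm (hrow _)), add_zero]

theorem layer_A_sum_dual_bumpSh (hA : IsA G v A) (K : G.Ch) {S : Finset V} (hv : v ∉ S)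
    (D j : ℕ) : layer D (A (∑ k ∈ Finset.range j, dual (K.bumpSh v k, S) D))
      = Finsupp.single (K, S) 1 + Finsupp.single (K.evenSh v j, S) 1 := by
  have hpair : ∀ p : G.Ch × Finset V, Finsupp.single p (1 : ZMod 2) + Finsupp.single p 1 = 0 :=
    fun p => by rw [← Finsupp.single_add, CharTwo.add_self_eq_zero, Finsupp.single_zero]
  induction j with
  | zero =>
    rw [Finset.sum_range_zero, ← hA.coe_toAddMonoidHom, map_zero, map_zero, Nat.cast_zero,
      K.evenSh_zero, hpair]
  | succ j ih =>
    rw [Nat.cast_succ, Finset.sum_range_succ, ← hA.coe_toAddMonoidHom, map_add, map_add,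
      hA.coe_toAddMonoidHom, ih, layer_A_dual_bumpSh hA K j hv, add_assoc,
      ← add_assoc (Finsupp.single (K.evenSh v j, S) 1), hpair, zero_add]

theorem IsB.exists_layer_partner (hB : IsB G v B) {φ : Cplus G} (hBφ : B φ = 0) {K : G.Ch}
    {S : Finset V} (hv : v ∉ S) {D : ℕ} (h : layer D φ (K, S) ≠ 0) :
    ∃ (K' : G.Ch) (j : ℕ), 0 < j ∧ layer D φ (K', S) ≠ 0 ∧ layer D φ (K'.evenSh v j, S) ≠ 0 := by
  have hsum : ∑ᶠ j, layer D φ (K.evenSh v j, S) = 0 := by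
    simp only [layer_apply]
    rw [← map_finsum (coeff D) (φ.hasFiniteSupport.fun_comp_of_injective
      (g := fun j => (K.evenSh v j, S)) fun _ _ h => K.evenSh_injective (Prod.mk.inj h).1),
      hB.finsum_evenSh φ K hv, hBφ, Finsupp.zero_apply, map_zero]
  obtain ⟨j, hj, hjD⟩ : ∃ j ≠ 0, layer D φ (K.evenSh v j, S) ≠ 0 := by
    by_contra! hc
    rw [finsum_eq_single _ 0 hc, K.evenSh_zero] at hsum
    exact h hsum
  rcases hj.lt_or_gt with hneg | hpos
  · refine ⟨K.evenSh v j, (-j).toNat, by omega, hjD, ?_⟩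
    rwa [Ch.evenSh_evenSh, show j + ((-j).toNat : ℤ) = 0 by omega, Ch.evenSh_zero]
  · exact ⟨K, j.toNat, by omega, h, by rwa [Int.toNat_of_nonneg hpos.le]⟩

theorem exists_mem_range_layer_support_subset (hA : IsA G v A) (hB : IsB G v B) {φ : Cplus G}
    (hBφ : B φ = 0) {D : ℕ} (hφ : layer D φ ≠ 0) :
    ∃ ξ ∈ hA.toAddMonoidHom.range, ξ ∈ degreeLT _ (D + 1) ∧ layer D ξ ≠ 0 ∧
      (layer D ξ).support ⊆ (layer D φ).support := by
  classical
  obtain ⟨⟨K, S⟩, hp⟩ := Finsupp.support_nonempty_iff.mpr hφ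
  by_cases hv : v ∈ S
  · refine ⟨dual (K, S) D, dual_mem_range_of_mem hA D K hv, single_Um_mem_degreeLT _ D, ?_, ?_⟩
    · rw [dual, layer_single_Um]
      exact Finsupp.single_ne_zero.mpr one_ne_zero
    · rw [dual, layer_single_Um]
      exact Finsupp.support_single_subset.trans (Finset.singleton_subset_iff.mpr hp)
  obtain ⟨K', j, hj, h₁, h₂⟩ := hB.exists_layer_partner hBφ hv (Finsupp.mem_support_iff.mp hp)
  have hne : (K'.evenSh v j, S) ≠ (K', S) := fun h => by
    have := K'.evenSh_injective ((Prod.mk.inj h).1.trans (K'.evenSh_zero (v := v)).symm)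
    omega
  refine ⟨_, ⟨∑ k ∈ Finset.range j, dual (K'.bumpSh v k, S) D, rfl⟩,
    hA.mem_degreeLT (AddSubgroup.sum_mem _ fun k _ => single_Um_mem_degreeLT _ D), ?_, ?_⟩
  all_goals rw [hA.coe_toAddMonoidHom, layer_A_sum_dual_bumpSh hA K' hv]
  · refine fun h => one_ne_zero (α := ZMod 2) ?_
    simpa [Finsupp.single_apply, hne] using DFunLike.congr_fun h (K', S)
  · refine Finsupp.support_add.trans (Finset.union_subset ?_ ?_) <;>
      refine Finsupp.support_single_subset.trans (Finset.singleton_subset_iff.mpr ?_) <;>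
      exact Finsupp.mem_support_iff.mpr ‹_›

theorem mem_range_of_mem_degreeLT (hA : IsA G v A) (hB : IsB G v B) (D : ℕ) {φ : Cplus G}
    (hBφ : B φ = 0) (hφ : φ ∈ degreeLT _ D) : φ ∈ hA.toAddMonoidHom.range := by
  classical
  induction D generalizing φ with
  | zero => rw [eq_zero_of_mem_degreeLT_zero hφ]; exact zero_mem _
  | succ D ihD =>
  induction hc : (layer D φ).support.card using Nat.strong_induction_on generalizing φ with
  | _ c ihc =>
  by_cases hlayer : layer D φ = 0
  · exact ihD hBφ (mem_degreeLT_of_layer_eq_zero hφ hlayer)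
  obtain ⟨ξ, hξ, hξD, hξ0, hξφ⟩ := exists_mem_range_layer_support_subset hA hB hBφ hlayer
  have hBξ : B ξ = 0 := by
    obtain ⟨ψ, rfl⟩ := hξ
    exact B_A_eq_zero hA hB ψ
  have hcard : (layer D (φ + ξ)).support.card < c := by
    rw [map_add, ← hc]
    exact card_support_add_lt hξφ hξ0
  have hBφξ : B (φ + ξ) = 0 := by
    rw [← hB.coe_toAddMonoidHom, map_add, hB.coe_toAddMonoidHom, hBφ, hBξ, add_zero]
  simpa using sub_mem (ihc _ hcard hBφξ (add_mem hφ hξD) rfl) hξ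

end Exactness

/-- Exactness at the middle term: the image of the map
`A : C⁺(G₊₁(v)) → C⁺(G)` equals the kernel of the map `B : C⁺(G) → C⁺(G−v)`. -/
theorem range_A_eq_ker_B (G : WGraph V) (v : V)
    (A : Cplus (G.bump v) → Cplus G) (hA : IsA G v A)
    (B : Cplus G → Cplus (G.delete v)) (hB : IsB G v B) :
    Set.range A = {φ : Cplus G | B φ = 0} := by
  ext φ
  refine ⟨?_, fun hBφ => ?_⟩
  · rintro ⟨ψ, rfl⟩
    exact B_A_eq_zero hA hB ψ
  · obtain ⟨D, hD⟩ := exists_mem_degreeLT φ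
    exact mem_range_of_mem_degreeLT hA hB D hBφ hD

end
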